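/- arXiv:1502.06693 — 4 statements merged into one kernel-verified Lean document; each statement's English description precedes it below -/
import Mathlib

section
/- For an index 𝐤 = (k_1,…,k_r) and 1 ≤ i ≤ r, the variant finite multiple zeta value satisfies ζ^{(i)}_𝒜(𝐤) = Σ_{φ ∈ Φ^i_r} ζ_𝒜(Σ_{j: φ(j)=1} k_j, …, Σ_{j: φ(j)=s} k_j), where for each φ the integer s is determined by φ ∈ Φ_{r,s}. -/
open scoped BigOperators

set_option synthInstance.maxHeartbeats 400000

namespace FMP

/-- The type of prime numbers. -/
abbrev PP := Nat.Primes

instance (p : PP) : Fact (Nat.Prime (p : ℕ)) := ⟨p.2⟩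

/-- The ideal of families vanishing at all but finitely many primes. -/
def cofinIdeal (R : PP → Type) [∀ p, CommRing (R p)] : Ideal (∀ p, R p) where
  carrier := {f | ∀ᶠ p in Filter.cofinite, f p = 0}
  add_mem' := by
    intro f g hf hg
    show ∀ᶠ p in Filter.cofinite, (f + g) p = 0
    simp only [Set.mem_setOf_eq] at hf hg
    filter_upwards [hf, hg] with p h1 h2
    simp [h1, h2]
  zero_mem' := by
    show ∀ᶠ p in Filter.cofinite, (0 : ∀ p, R p) p = 0
    exact Filter.Eventually.of_forall fun p => rfl
  smul_mem' := by
    intro c f hf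
    show ∀ᶠ p in Filter.cofinite, (c • f) p = 0
    simp only [Set.mem_setOf_eq] at hf
    filter_upwards [hf] with p h
    simp [h]

lemma mem_cofinIdeal {R : PP → Type} [∀ p, CommRing (R p)] (f : ∀ p, R p) :
    f ∈ cofinIdeal R ↔ ∀ᶠ p in Filter.cofinite, f p = 0 := Iff.rfl

/-- The ring 𝒜 = (∏ₚ 𝔽ₚ)/(⊕ₚ 𝔽ₚ). -/
abbrev A : Type := (∀ p : PP, ZMod p) ⧸ cofinIdeal fun p => ZMod p

/-- The ring ℬ = (∏ₚ 𝔽ₚ[T])/(⊕ₚ 𝔽ₚ[T]). -/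
abbrev B : Type := (∀ p : PP, Polynomial (ZMod p)) ⧸ cofinIdeal fun p => Polynomial (ZMod p)

noncomputable def Amk : (∀ p : PP, ZMod p) →+* A := Ideal.Quotient.mk _
noncomputable def Bmk : (∀ p : PP, Polynomial (ZMod p)) →+* B := Ideal.Quotient.mk _

/-- The componentwise action of 𝒜 on ℬ, as a ring homomorphism 𝒜 →+* ℬ. -/
noncomputable def AtoB : A →+* B :=
  Ideal.Quotient.lift _
    (Bmk.comp (Pi.ringHom fun p => Polynomial.C.comp (Pi.evalRingHom (fun q : PP => ZMod (q : ℕ)) p)))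
    (fun f hf => by
      rw [RingHom.comp_apply]
      rw [show Bmk = Ideal.Quotient.mk (cofinIdeal fun p => Polynomial (ZMod p)) from rfl]
      rw [Ideal.Quotient.eq_zero_iff_mem, mem_cofinIdeal]
      rw [mem_cofinIdeal] at hf
      filter_upwards [hf] with p h
      show Polynomial.C (f p) = 0
      rw [h, map_zero])

/-- Partial sums: `psum l i = l 0 + ... + l i`. -/
def psum {r : ℕ} (l : Fin r → ℕ) (i : Fin r) : ℕ := ∑ j ∈ Finset.Iic i, l j

/-- The finset of tuples `(l 0, ..., l (r-1))` with `0 < l i < p`. -/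
def pf (r p : ℕ) : Finset (Fin r → ℕ) := Fintype.piFinset fun _ => Finset.Ioo 0 p

/-- The denominator `L_1^{k_1} ⋯ L_r^{k_r}` of a term, as an element of 𝔽ₚ.
(Its inverse is `0` whenever some partial sum is divisible by `p`, so taking inverses
of these denominators automatically implements the restricted sums `Σ'`.) -/
def den (p : PP) (k : List ℕ) (l : Fin k.length → ℕ) : ZMod (p : ℕ) :=
  ∏ i, ((psum l i : ℕ) : ZMod (p : ℕ)) ^ k.get i

/-- The weight of an index. -/
def wt (k : List ℕ) : ℕ := k.sum

/-- The finite multiple zeta value ζ_𝒜(k). -/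
noncomputable def zetaA (k : List ℕ) : A :=
  Amk fun p => ∑ l ∈ (pf k.length (p : ℕ)).filter (fun l => ∑ i, l i < (p : ℕ)), (den p k l)⁻¹

/-- The variant ζ^{(i)}_𝒜(k) of finite multiple zeta values. -/
noncomputable def zetaAi (i : ℕ) (k : List ℕ) : A :=
  Amk fun p => ∑ l ∈ (pf k.length (p : ℕ)).filter
      (fun l => (i - 1) * (p : ℕ) < ∑ j, l j ∧ ∑ j, l j < i * (p : ℕ)), (den p k l)⁻¹

/-- The finite multiple polylogarithm li_k(T) ∈ ℬ. -/
noncomputable def liT (k : List ℕ) : B :=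
  Bmk fun p => ∑ l ∈ pf k.length (p : ℕ),
    Polynomial.C ((den p k l)⁻¹) * Polynomial.X ^ (∑ i, l i)

/-- The element T^p of ℬ. -/
noncomputable def Tp : B := Bmk fun p => Polynomial.X ^ (p : ℕ)

/-- The finite multiple polylogarithm li(λ, μ, ν; T) of type (λ, μ, ν). -/
noncomputable def liType (lam mu nu : List ℕ) : B :=
  Bmk fun p =>
    ∑ l ∈ pf lam.length (p : ℕ), ∑ m ∈ pf mu.length (p : ℕ), ∑ n ∈ pf nu.length (p : ℕ),
      Polynomial.C ((den p lam l * den p mu m *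
          ∏ z, ((((∑ i, l i) + (∑ j, m j) + psum n z : ℕ)) : ZMod (p : ℕ)) ^ nu.get z)⁻¹) *
        Polynomial.X ^ ((∑ i, l i) + (∑ j, m j) + (∑ z, n z))

section Comb

/-- Extension of φ : Fin r → Fin s to ℕ → ℕ (by zero). -/
def extF {r s : ℕ} (φ : Fin r → Fin s) : ℕ → ℕ := fun a => if h : a < r then (φ ⟨a, h⟩ : ℕ) else 0

/-- Φ_{r,s}: surjections φ : [r] → [s] with φ(a) ≠ φ(a+1) for all a. -/
def PhiSet (r s : ℕ) : Set (Fin r → Fin s) :=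
  {φ | Function.Surjective φ ∧ ∀ a : ℕ, a + 1 < r → extF φ a ≠ extF φ (a + 1)}

/-- δ_φ(i) = #{a ∈ [i-1] : φ(a) > φ(a+1)} (1-based i). -/
def deltaF {r s : ℕ} (φ : Fin r → Fin s) (i : ℕ) : ℕ :=
  ((Finset.range (i - 1)).filter fun a => extF φ (a + 1) < extF φ a).card

/-- β(φ) = δ_φ(r) + 1. -/
def betaF {r s : ℕ} (φ : Fin r → Fin s) : ℕ := deltaF φ r + 1

/-- X_r: tuples (l_1, ..., l_r) ∈ [p-1]^r all of whose partial sums are prime to p. -/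
def Xr (p r : ℕ) : Set (Fin r → ℕ) :=
  {l | (∀ i, 0 < l i ∧ l i < p) ∧ ∀ i, Nat.Coprime (psum l i) p}

/-- Y_s: tuples 0 < A_1 < ⋯ < A_s < p. -/
def Ys (p s : ℕ) : Set (Fin s → ℕ) :=
  {Av | StrictMono Av ∧ (∀ t, 0 < Av t) ∧ ∀ t, Av t < p}

end Comb


open scoped Classical

/-!
Fix `p` and `l` with `0 < l j < p`. The residues `A j = L j mod p` of the partial sums determine
`l` (as `l j ≡ A j - A (j - 1)`), consecutive residues differ, and `L_r = A_r + p * (number of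
descents of A)`, because the partial sums pass a multiple of `p` exactly where the residue drops.
Terms with some `L j ≡ 0` vanish, so `ζ^{(i)}` becomes a sum over residue sequences in `(0, p)`
with distinct neighbours and `i - 1` descents, and each term depends on `A` only. Such a sequence
factors uniquely as `A = M ∘ φ` with `M` the increasing enumeration of its values and
`φ ∈ Φ_{r,s}` having the descents of `A`; the increasing `M` in `(0, p)` are the partial sums of
the tuples of `ζ_𝒜`, and regrouping the exponents along the fibres of `φ` gives `ζ_𝒜(k_φ)`.
-/

open Finset Function

variable {r s : ℕ}

lemma mem_pf {p : ℕ} {l : Fin r → ℕ} : l ∈ pf r p ↔ ∀ j, 0 < l j ∧ l j < p := by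
  simp [pf, Fintype.mem_piFinset]

lemma psum_zero (l : Fin r → ℕ) (h : 0 < r) : psum l ⟨0, h⟩ = l ⟨0, h⟩ := by
  rw [psum, show Iic (⟨0, h⟩ : Fin r) = {⟨0, h⟩} by ext; simp [Fin.le_def, Fin.ext_iff],
    sum_singleton]

lemma psum_succ (l : Fin r → ℕ) (j : ℕ) (h : j + 1 < r) :
    psum l ⟨j + 1, h⟩ = psum l ⟨j, by omega⟩ + l ⟨j + 1, h⟩ := by
  have : Iic (⟨j + 1, h⟩ : Fin r) = insert ⟨j + 1, h⟩ (Iic ⟨j, by omega⟩) := by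
    ext; simp only [mem_Iic, mem_insert, Fin.le_def, Fin.ext_iff]; omega
  rw [psum, this, sum_insert (by simp [Fin.le_def]), psum, add_comm]

lemma psum_last (l : Fin r → ℕ) (h : 0 < r) : psum l ⟨r - 1, by omega⟩ = ∑ j, l j := by
  rw [psum, show Iic (⟨r - 1, by omega⟩ : Fin r) = univ by ext ⟨a, ha⟩; simp [Fin.le_def]; omega]

lemma psum_le_sum (l : Fin r → ℕ) (j : Fin r) : psum l j ≤ ∑ j, l j :=
  sum_le_sum_of_subset (subset_univ _)

lemma le_psum (l : Fin r → ℕ) (j : Fin r) : l j ≤ psum l j :=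
  single_le_sum (fun _ _ => Nat.zero_le _) (mem_Iic.2 le_rfl)

def natExt (f : Fin r → ℕ) (a : ℕ) : ℕ := if h : a < r then f ⟨a, h⟩ else 0

lemma natExt_of_lt (f : Fin r → ℕ) {a : ℕ} (h : a < r) : natExt f a = f ⟨a, h⟩ := dif_pos h

def AdjDistinct (f : Fin r → ℕ) : Prop := ∀ a, a + 1 < r → natExt f a ≠ natExt f (a + 1)

def descentsBelow (f : Fin r → ℕ) (n : ℕ) : ℕ := #{a ∈ range n | natExt f (a + 1) < natExt f a}

def descents (f : Fin r → ℕ) : ℕ := descentsBelow f (r - 1)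

lemma deltaF_eq_descents (φ : Fin r → Fin s) : deltaF φ r = descents (fun j => (φ j : ℕ)) := rfl

lemma descentsBelow_succ (f : Fin r → ℕ) (n : ℕ) :
    descentsBelow f (n + 1) =
      descentsBelow f n + if natExt f (n + 1) < natExt f n then 1 else 0 := by
  rw [descentsBelow, range_add_one, filter_insert]
  split_ifs with h
  · rw [card_insert_of_notMem (by simp), descentsBelow]
  · rfl

lemma adjDistinct_comp_iff {M : Fin s → ℕ} (hM : Injective M) (φ : Fin r → Fin s) :
    AdjDistinct (M ∘ φ) ↔ AdjDistinct (fun j => (φ j : ℕ)) := by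
  refine forall_congr' fun a => imp_congr_right fun h => ?_
  simp only [natExt_of_lt _ h, natExt_of_lt _ (by omega : a < r), comp_apply, ne_eq,
    hM.eq_iff, Fin.val_inj]

lemma descents_comp {M : Fin s → ℕ} (hM : StrictMono M) (φ : Fin r → Fin s) :
    descents (M ∘ φ) = descents (fun j => (φ j : ℕ)) := by
  unfold descents descentsBelow
  congr 1
  refine filter_congr fun a ha => ?_
  have : a + 1 < r := by rw [mem_range] at ha; omega
  simp only [natExt_of_lt _ this, natExt_of_lt _ (by omega : a < r), comp_apply, hM.lt_iff_lt,
    Fin.val_fin_lt]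

lemma strictMono_iff_adjDistinct_and_descents_eq_zero {M : Fin s → ℕ} :
    StrictMono M ↔ AdjDistinct M ∧ descents M = 0 := by
  have : AdjDistinct M ∧ descents M = 0 ↔ ∀ a, a + 1 < s → natExt M a < natExt M (a + 1) := by
    simp only [AdjDistinct, descents, descentsBelow, card_eq_zero, filter_eq_empty_iff, mem_range]
    exact ⟨fun h a ha => lt_of_le_of_ne (not_lt.1 (h.2 (by omega))) (h.1 a ha),
      fun h => ⟨fun a ha => (h a ha).ne, fun a ha => (h a (by omega)).not_gt⟩⟩
  rw [this]
  cases s with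
  | zero => simp [Subsingleton.strictMono]
  | succ n =>
    rw [Fin.strictMono_iff_lt_succ]
    refine ⟨fun h a ha => ?_, fun h i => ?_⟩
    · rw [natExt_of_lt _ ha, natExt_of_lt _ (by omega : a < n + 1)]
      exact h ⟨a, by omega⟩
    · have := h i (by omega)
      rwa [natExt_of_lt _ (by omega), natExt_of_lt _ (by omega)] at this

lemma add_div_eq_add_ite {p x c : ℕ} (hc : c < p) :
    (x + c) / p = x / p + if (x + c) % p < x % p then 1 else 0 := by
  have hp : 0 < p := by omega
  have h := Nat.add_mod_add_ite x c p
  have := Nat.mod_lt x hp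
  rw [Nat.add_div hp, Nat.div_eq_of_lt hc, Nat.mod_eq_of_lt hc] at *
  split_ifs at * <;> omega

def residues (p : ℕ) (l : Fin r → ℕ) (j : Fin r) : ℕ := psum l j % p

lemma psum_div_eq_descentsBelow {p : ℕ} {l : Fin r → ℕ} (hl : ∀ j, l j < p) (j : ℕ) (h : j < r) :
    psum l ⟨j, h⟩ / p = descentsBelow (residues p l) j := by
  induction j with
  | zero => simp [psum_zero, Nat.div_eq_of_lt (hl _), descentsBelow]
  | succ j ih =>
    rw [psum_succ, add_div_eq_add_ite (hl _), ih (by omega), descentsBelow_succ,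
      natExt_of_lt _ h, natExt_of_lt _ (by omega)]
    simp only [residues, psum_succ]

lemma descents_residues {p : ℕ} {l : Fin r → ℕ} (hl : ∀ j, l j < p) :
    descents (residues p l) = (∑ j, l j) / p := by
  rcases Nat.eq_zero_or_pos r with rfl | hr
  · simp [descents, descentsBelow]
  · rw [descents, ← psum_div_eq_descentsBelow hl (r - 1) (by omega), psum_last l hr]

lemma adjDistinct_residues {p : ℕ} {l : Fin r → ℕ} (hl : ∀ j, 0 < l j ∧ l j < p) :
    AdjDistinct (residues p l) := by
  intro a h heq
  rw [natExt_of_lt _ (by omega), natExt_of_lt _ h, residues, residues, psum_succ] at heq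
  have := Nat.sub_mod_eq_zero_of_mod_eq heq.symm
  rw [Nat.add_sub_cancel_left, Nat.mod_eq_of_lt (hl _).2] at this
  exact (hl _).1.ne' this

def prevVal (B : Fin r → ℕ) : ℕ → ℕ
  | 0 => 0
  | a + 1 => natExt B a

def steps (p : ℕ) (B : Fin r → ℕ) (j : Fin r) : ℕ := ((B j : ZMod p) - prevVal B j).val

lemma steps_residues {p : ℕ} {l : Fin r → ℕ} (hl : ∀ j, l j < p) : steps p (residues p l) = l := by
  funext ⟨j, h⟩
  cases j with
  | zero => simp [steps, prevVal, residues, psum_zero, Nat.mod_eq_of_lt (hl _)]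
  | succ j =>
    simp [steps, prevVal, residues, natExt_of_lt _ (by omega : j < r), psum_succ,
      Nat.mod_eq_of_lt (hl _)]

section Steps

variable {p : ℕ} [NeZero p]

lemma cast_psum_steps (B : Fin r → ℕ) (j : ℕ) (h : j < r) :
    (psum (steps p B) ⟨j, h⟩ : ZMod p) = B ⟨j, h⟩ := by
  induction j with
  | zero => simp [psum_zero, steps, prevVal]
  | succ j ih =>
    rw [psum_succ, Nat.cast_add, ih (by omega)]
    simp [steps, prevVal, natExt_of_lt _ (by omega : j < r)]

lemma residues_steps {B : Fin r → ℕ} (hB : ∀ j, B j < p) : residues p (steps p B) = B := by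
  funext ⟨j, h⟩
  rw [residues, ← ZMod.val_natCast, cast_psum_steps, ZMod.val_natCast, Nat.mod_eq_of_lt (hB _)]

lemma steps_lt (B : Fin r → ℕ) (j : Fin r) : steps p B j < p := ZMod.val_lt _

lemma steps_pos {B : Fin r → ℕ} (hB : ∀ j, 0 < B j ∧ B j < p) (hadj : AdjDistinct B)
    (j : Fin r) : 0 < steps p B j := by
  have hlt : prevVal B j < p := by
    obtain ⟨_ | a, h⟩ := j
    · exact Nat.pos_of_neZero p
    · simpa [prevVal, natExt_of_lt _ (by omega : a < r)] using (hB _).2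
  have hne : prevVal B j ≠ B j := by
    obtain ⟨_ | a, h⟩ := j
    · exact (hB _).1.ne
    · simpa [prevVal, natExt_of_lt _ h] using hadj a h
  rw [steps, Nat.pos_iff_ne_zero, ZMod.val_ne_zero, sub_ne_zero]
  intro heq
  apply hne
  rw [← Nat.mod_eq_of_lt hlt, ← Nat.mod_eq_of_lt (hB j).2, ← ZMod.val_natCast, ← heq,
    ZMod.val_natCast]

theorem sum_residues_eq_sum_adjDistinct {β : Type*} [AddCommMonoid β] (d : ℕ)
    (F : (Fin r → ℕ) → β) :
    ∑ l ∈ (pf r p).filter (fun l => (∑ j, l j) / p = d ∧ ∀ j, psum l j % p ≠ 0),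
        F (residues p l) =
      ∑ B ∈ (pf r p).filter (fun B => AdjDistinct B ∧ descents B = d), F B := by
  refine sum_nbij' (residues p) (steps p) ?_ ?_ ?_ ?_ (fun _ _ => rfl)
  · intro l hl
    simp only [mem_filter, mem_pf] at hl ⊢
    obtain ⟨hl, hsum, hres⟩ := hl
    exact ⟨fun j => ⟨Nat.pos_of_ne_zero (hres j), Nat.mod_lt _ (Nat.pos_of_neZero p)⟩,
      adjDistinct_residues hl, by rw [descents_residues fun j => (hl j).2, hsum]⟩
  · intro B hB
    simp only [mem_filter, mem_pf] at hB ⊢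
    obtain ⟨hB, hadj, hdesc⟩ := hB
    have hres := residues_steps (p := p) fun j => (hB j).2
    refine ⟨fun j => ⟨steps_pos hB hadj j, steps_lt B j⟩, ?_, fun j => ?_⟩
    · rw [← descents_residues (steps_lt B), hres, hdesc]
    · rw [← residues, hres]
      exact (hB j).1.ne'
  · intro l hl
    simp only [mem_filter, mem_pf] at hl
    exact steps_residues fun j => (hl.1 j).2
  · intro B hB
    simp only [mem_filter, mem_pf] at hB
    exact residues_steps fun j => (hB.1 j).2

end Steps

section SortedRange

variable (B : Fin r → ℕ) (h : #(univ.image B) = s)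

noncomputable def sortedRange : Fin s ↪o ℕ := (univ.image B).orderEmbOfFin h

noncomputable def rank (j : Fin r) : Fin s :=
  ((univ.image B).orderIsoOfFin h).symm ⟨B j, mem_image_of_mem B (mem_univ j)⟩

lemma sortedRange_rank (j : Fin r) : sortedRange B h (rank B h j) = B j := by
  rw [sortedRange, ← coe_orderIsoOfFin_apply, rank, OrderIso.apply_symm_apply]

lemma sortedRange_mem (t : Fin s) : sortedRange B h t ∈ univ.image B :=
  orderEmbOfFin_mem _ h t

lemma rank_surjective : Surjective (rank B h) := by
  intro t
  obtain ⟨j, -, hj⟩ := mem_image.1 (sortedRange_mem B h t)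
  exact ⟨j, (sortedRange B h).injective (by rw [sortedRange_rank, hj])⟩

lemma sortedRange_comp_rank : sortedRange B h ∘ rank B h = B :=
  funext (sortedRange_rank B h)

end SortedRange

section Comp

variable {M : Fin s → ℕ} {φ : Fin r → Fin s}

lemma card_image_comp (hM : Injective M) (hφ : Surjective φ) : #(univ.image (M ∘ φ)) = s := by
  rw [← image_image, image_univ_of_surjective hφ, card_image_of_injective _ hM, card_univ,
    Fintype.card_fin]

lemma sortedRange_comp (hM : StrictMono M) (hφ : Surjective φ) (h : #(univ.image (M ∘ φ)) = s) :
    ⇑(sortedRange (M ∘ φ) h) = M := by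
  refine (orderEmbOfFin_unique h (fun t => ?_) hM).symm
  obtain ⟨j, rfl⟩ := hφ t
  exact mem_image_of_mem _ (mem_univ j)

lemma rank_comp (hM : StrictMono M) (hφ : Surjective φ) (h : #(univ.image (M ∘ φ)) = s) :
    rank (M ∘ φ) h = φ := by
  funext j
  apply (sortedRange (M ∘ φ) h).injective
  rw [sortedRange_rank, sortedRange_comp hM hφ]
  rfl

end Comp

theorem sum_adjDistinct_eq_sum_surjections {β : Type*} [AddCommMonoid β] (p d : ℕ) (hr : 0 < r)
    (F : (Fin r → ℕ) → β) :
    ∑ B ∈ (pf r p).filter (fun B => AdjDistinct B ∧ descents B = d), F B =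
      ∑ s ∈ Icc 1 r, ∑ φ ∈ univ.filter (fun φ : Fin r → Fin s => φ ∈ PhiSet r s ∧ deltaF φ r = d),
        ∑ M ∈ (pf s p).filter StrictMono, F (M ∘ φ) := by
  have hcard : ∀ B : Fin r → ℕ, #(univ.image B) ∈ Icc 1 r := fun B =>
    mem_Icc.2 ⟨card_pos.2 (univ_nonempty_iff.2 ⟨⟨0, hr⟩⟩ |>.image B),
      card_image_le.trans (by simp)⟩
  rw [← sum_fiberwise_of_maps_to fun B _ => hcard B]
  refine sum_congr rfl fun s _ => ?_
  rw [filter_filter, ← sum_product']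
  refine sum_bij' (fun B hB => (rank B (mem_filter.1 hB).2.2, sortedRange B (mem_filter.1 hB).2.2))
    (fun x _ => x.2 ∘ x.1) ?_ ?_ ?_ ?_ ?_
  · intro B hB
    simp only [mem_filter, mem_pf, mem_product, mem_univ, true_and] at hB ⊢
    obtain ⟨hB, ⟨hadj, hdesc⟩, hs⟩ := hB
    have hsr := sortedRange_comp_rank B hs
    have hmono := (sortedRange B hs).strictMono
    refine ⟨⟨⟨rank_surjective B hs, ?_⟩, ?_⟩, fun t => ?_, hmono⟩
    · rw [← hsr] at hadj
      exact (adjDistinct_comp_iff hmono.injective _).1 hadj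
    · rwa [deltaF_eq_descents, ← descents_comp hmono, hsr]
    · obtain ⟨j, -, hj⟩ := mem_image.1 (sortedRange_mem B hs t)
      rw [← hj]
      exact hB j
  · rintro ⟨φ, M⟩ hx
    simp only [mem_filter, mem_pf, mem_product, mem_univ, true_and] at hx ⊢
    obtain ⟨⟨⟨hφ, hadj⟩, hdesc⟩, hM, hmono⟩ := hx
    exact ⟨fun j => hM (φ j), ⟨(adjDistinct_comp_iff hmono.injective φ).2 hadj,
      by rwa [descents_comp hmono, ← deltaF_eq_descents]⟩, card_image_comp hmono.injective hφ⟩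
  · intro B hB
    exact sortedRange_comp_rank B _
  · rintro ⟨φ, M⟩ hx
    simp only [mem_filter, mem_pf, mem_product, mem_univ, true_and] at hx
    obtain ⟨⟨⟨hφ, -⟩, -⟩, -, hmono⟩ := hx
    exact Prod.ext (rank_comp hmono hφ _) (sortedRange_comp hmono hφ _)
  · intro B hB
    rw [sortedRange_comp_rank]

-- `den p k l = prodPow p k.get (psum l)` by definition.
def prodPow (p : ℕ) (κ B : Fin r → ℕ) : ZMod p := ∏ j, (B j : ZMod p) ^ κ j

lemma prodPow_residues (p : ℕ) (κ l : Fin r → ℕ) :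
    prodPow p κ (residues p l) = prodPow p κ (psum l) := by
  simp [prodPow, residues]

lemma prodPow_comp (p : ℕ) (κ : Fin r → ℕ) (M : Fin s → ℕ) (φ : Fin r → Fin s) :
    prodPow p κ (M ∘ φ) = prodPow p (fun t => ∑ j ∈ univ.filter (fun j => φ j = t), κ j) M := by
  rw [prodPow, prodPow, ← prod_fiberwise univ φ]
  refine prod_congr rfl fun t _ => ?_
  rw [← prod_pow_eq_pow_sum]
  exact prod_congr rfl fun j hj => by rw [comp_apply, (mem_filter.1 hj).2]

lemma sub_one_mul_lt_and_lt_mul_iff {p n i : ℕ} (hp : 0 < p) (hi : 1 ≤ i) :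
    ((i - 1) * p < n ∧ n < i * p) ↔ (n / p = i - 1 ∧ n % p ≠ 0) := by
  obtain ⟨i, rfl⟩ : ∃ i', i = i' + 1 := ⟨i - 1, by omega⟩
  have hdiv := Nat.div_add_mod n p
  have hmod := Nat.mod_lt n hp
  rw [Nat.add_sub_cancel, add_one_mul]
  constructor
  · rintro ⟨h1, h2⟩
    have hq : n / p = i := Nat.div_eq_of_lt_le h1.le (by rwa [add_one_mul])
    refine ⟨hq, fun h0 => ?_⟩
    rw [hq, h0, mul_comm] at hdiv
    omega
  · rintro ⟨hq, h0⟩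
    rw [hq, mul_comm] at hdiv
    omega

section Window

variable {p : ℕ} [NeZero p]

lemma sum_window_eq_sum_residues {κ : Fin r → ℕ} (hκ : ∀ j, 0 < κ j) (hr : 0 < r) {i : ℕ}
    (hi : 1 ≤ i) :
    ∑ l ∈ (pf r p).filter (fun l => (i - 1) * p < ∑ j, l j ∧ ∑ j, l j < i * p),
        (prodPow p κ (psum l))⁻¹ =
      ∑ l ∈ (pf r p).filter (fun l => (∑ j, l j) / p = i - 1 ∧ ∀ j, psum l j % p ≠ 0),
        (prodPow p κ (residues p l))⁻¹ := by
  have hp := Nat.pos_of_neZero p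
  simp_rw [prodPow_residues]
  symm
  refine sum_subset (monotone_filter_right _ fun l _ hl => ?_) fun l hl hbad => ?_
  · rw [sub_one_mul_lt_and_lt_mul_iff hp hi]
    exact ⟨hl.1, psum_last l hr ▸ hl.2 _⟩
  · simp only [mem_filter, sub_one_mul_lt_and_lt_mul_iff hp hi, not_and, not_forall,
      not_not] at hl hbad
    obtain ⟨j, hj⟩ := hbad hl.1 hl.2.1
    rw [prodPow, prod_eq_zero (mem_univ j), ZMod.inv_zero]
    rw [← ZMod.natCast_mod, hj, Nat.cast_zero, zero_pow (hκ j).ne']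

lemma sum_psum_eq_sum_strictMono {β : Type*} [AddCommMonoid β] (G : (Fin s → ℕ) → β) :
    ∑ m ∈ (pf s p).filter (fun m => ∑ t, m t < p), G (psum m) =
      ∑ M ∈ (pf s p).filter StrictMono, G M := by
  -- Partial sums below `p` are their own residues: this is the case `d = 0` of
  -- `sum_residues_eq_sum_adjDistinct`.
  have hp := Nat.pos_of_neZero p
  have hres : ∀ m ∈ (pf s p).filter (fun m => ∑ t, m t < p), residues p m = psum m :=
    fun m hm => funext fun t =>
      Nat.mod_eq_of_lt ((psum_le_sum m t).trans_lt (mem_filter.1 hm).2)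
  rw [← sum_congr rfl fun m hm => congrArg G (hres m hm)]
  have hgood : (pf s p).filter (fun m => ∑ t, m t < p) =
      (pf s p).filter (fun m => (∑ t, m t) / p = 0 ∧ ∀ t, psum m t % p ≠ 0) := by
    refine filter_congr fun m hm => ⟨fun h => ⟨Nat.div_eq_of_lt h, fun t => ?_⟩, fun h => ?_⟩
    · rw [Nat.mod_eq_of_lt ((psum_le_sum m t).trans_lt h)]
      exact ((mem_pf.1 hm t).1.trans_le (le_psum m t)).ne'
    · exact (Nat.div_eq_zero_iff_lt hp).1 h.1
  rw [hgood, sum_residues_eq_sum_adjDistinct]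
  simp_rw [strictMono_iff_adjDistinct_and_descents_eq_zero]

theorem sum_window_eq_sum_surjections {κ : Fin r → ℕ} (hκ : ∀ j, 0 < κ j) (hr : 0 < r) {i : ℕ}
    (hi : 1 ≤ i) :
    ∑ l ∈ (pf r p).filter (fun l => (i - 1) * p < ∑ j, l j ∧ ∑ j, l j < i * p),
        (prodPow p κ (psum l))⁻¹ =
      ∑ s ∈ Icc 1 r, ∑ φ ∈ univ.filter (fun φ : Fin r → Fin s => φ ∈ PhiSet r s ∧ betaF φ = i),
        ∑ m ∈ (pf s p).filter (fun m => ∑ t, m t < p),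
          (prodPow p (fun t => ∑ j ∈ univ.filter (fun j => φ j = t), κ j) (psum m))⁻¹ := by
  rw [sum_window_eq_sum_residues hκ hr hi,
    sum_residues_eq_sum_adjDistinct (i - 1) fun B => (prodPow p κ B)⁻¹,
    sum_adjDistinct_eq_sum_surjections p _ hr]
  refine sum_congr rfl fun s _ => ?_
  rw [show univ.filter (fun φ : Fin r → Fin s => φ ∈ PhiSet r s ∧ betaF φ = i) =
      univ.filter (fun φ => φ ∈ PhiSet r s ∧ deltaF φ r = i - 1) by
    refine filter_congr fun φ _ => and_congr_right fun _ => ?_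
    rw [betaF]; omega]
  refine sum_congr rfl fun φ _ => ?_
  rw [sum_psum_eq_sum_strictMono fun M => (prodPow p _ M)⁻¹]
  simp_rw [prodPow_comp]

end Window

lemma zetaA_ofFn (K : Fin s → ℕ) :
    zetaA (List.ofFn K) =
      Amk fun p => ∑ m ∈ (pf s p).filter (fun m => ∑ t, m t < (p : ℕ)),
        (prodPow p K (psum m))⁻¹ := by
  suffices ∀ (L : List ℕ) (h : L.length = s), (∀ t, L.get t = K (Fin.cast h t)) →
      zetaA L = Amk fun p => ∑ m ∈ (pf s p).filter (fun m => ∑ t, m t < (p : ℕ)),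
        (prodPow p K (psum m))⁻¹ from
    this _ List.length_ofFn fun t => List.get_ofFn K t
  rintro L rfl hL
  simp only [zetaA, den, prodPow, hL, Fin.cast_eq_self]

theorem zetaAi_eq_sum_zetaA_general (k : List ℕ) (hk : ∀ j ∈ k, 0 < j) (hr : 0 < k.length)
    (i : ℕ) (hi1 : 1 ≤ i) :
    zetaAi i k = ∑ s ∈ Finset.Icc 1 k.length,
      ∑ φ ∈ Finset.univ.filter
        (fun φ : Fin k.length → Fin s => φ ∈ PhiSet k.length s ∧ betaF φ = i),
        zetaA (List.ofFn fun t : Fin s =>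
          ∑ j ∈ Finset.univ.filter (fun j => φ j = t), k.get j) := by
  simp_rw [zetaA_ofFn, ← map_sum]
  refine congrArg Amk <| funext fun p => ?_
  simp only [Finset.sum_apply]
  exact sum_window_eq_sum_surjections (fun j => hk _ (List.get_mem k j)) hr hi1

/-- The variant ζ^{(i)}_𝒜 is a sum of finite multiple zeta values of the same weight. -/
theorem zetaAi_eq_sum_zetaA (k : List ℕ) (hk : ∀ j ∈ k, 0 < j) (hr : 0 < k.length)
    (i : ℕ) (hi1 : 1 ≤ i) (hi2 : i ≤ k.length) :
    zetaAi i k = ∑ s ∈ Finset.Icc 1 k.length,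
      ∑ φ ∈ Finset.univ.filter
        (fun φ : Fin k.length → Fin s => φ ∈ PhiSet k.length s ∧ betaF φ = i),
        zetaA (List.ofFn fun t : Fin s =>
          ∑ j ∈ Finset.univ.filter (fun j => φ j = t), k.get j) :=
  zetaAi_eq_sum_zetaA_general k hk hr i hi1

end FMP
end

section
/- Fix a prime p, positive integers r, s, and φ ∈ Φ_{r,s}. Given (A_1,…,A_s) ∈ Y_s, define integers l_1 := A_{φ(1)} and l_i := (A_{φ(i)} + δ_φ(i)p) − (A_{φ(i−1)} + δ_φ(i−1)p) for 2 ≤ i ≤ r. Then 0 < l_i < p for all i, and l_1 + ⋯ + l_i = A_{φ(i)} + δ_φ(i)p for all 1 ≤ i ≤ r; in particular each partial sum l_1+⋯+l_i is congruent to A_{φ(i)} modulo p and is prime to p. -/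
open scoped BigOperators

namespace FMP

/-! The `i`-th term is `A_{φ(i)} - A_{φ(i-1)}`, plus `p` exactly when `φ` descends at `i - 1`.
Consecutive values of `φ` differ and `A` is strictly increasing with values in `(0, p)`, so this
lies in `(0, p)` in both cases. The partial sums telescope to `A_{φ(i)} + δ_φ(i) p`, which is
`A_{φ(i)} ∈ (0, p)` modulo `p`. -/

lemma sum_Iic_eq_of_sub {M : Type*} [AddCommGroup M] {r : ℕ} {f g : Fin r → M}
    (h0 : ∀ i : Fin r, (i : ℕ) = 0 → f i = g i)
    (hsucc : ∀ k (hk : k + 1 < r), f ⟨k + 1, hk⟩ = g ⟨k + 1, hk⟩ - g ⟨k, by omega⟩)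
    (i : Fin r) : ∑ j ∈ Finset.Iic i, f j = g i := by
  obtain ⟨v, hv⟩ := i
  induction v with
  | zero =>
    have hIic : Finset.Iic (⟨0, hv⟩ : Fin r) = {⟨0, hv⟩} := by
      ext x
      simp only [Finset.mem_Iic, Finset.mem_singleton, Fin.le_def, Fin.ext_iff]
      omega
    rw [hIic, Finset.sum_singleton, h0 _ rfl]
  | succ k ih =>
    have hIio : Finset.Iio (⟨k + 1, hv⟩ : Fin r) = Finset.Iic ⟨k, by omega⟩ := by
      ext x
      simp only [Finset.mem_Iio, Finset.mem_Iic, Fin.lt_def, Fin.le_def]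
      omega
    rw [Finset.Iic_eq_cons_Iio, Finset.sum_cons, hIio, ih, hsucc]
    abel

section Construction

variable {r s : ℕ} (φ : Fin r → Fin s)

lemma extF_of_lt {a : ℕ} (h : a < r) : extF φ a = φ ⟨a, h⟩ := dif_pos h

lemma deltaF_one : deltaF φ 1 = 0 := by
  simp [deltaF]

lemma deltaF_add_two (n : ℕ) :
    deltaF φ (n + 2) = deltaF φ (n + 1) + if extF φ (n + 1) < extF φ n then 1 else 0 := by
  rw [deltaF, deltaF, show n + 2 - 1 = n + 1 from rfl, Nat.add_sub_cancel, Finset.range_add_one,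
    Finset.filter_insert]
  split
  · rw [Finset.card_insert_of_notMem (by simp)]
  · simp

/-- The paper's `A_{φ(i)} + δ_φ(i) p`, at the 0-based position `i`. -/
def liftedValue (Av : Fin s → ℕ) (p : ℕ) (i : Fin r) : ℤ :=
  Av (φ i) + deltaF φ ((i : ℕ) + 1) * p

lemma liftedValue_succ_sub (Av : Fin s → ℕ) (p : ℕ) {k : ℕ} (hk : k + 1 < r) :
    liftedValue φ Av p ⟨k + 1, hk⟩ - liftedValue φ Av p ⟨k, by omega⟩ =
      (Av (φ ⟨k + 1, hk⟩) : ℤ) - Av (φ ⟨k, by omega⟩) +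
        if φ ⟨k + 1, hk⟩ < φ ⟨k, by omega⟩ then (p : ℤ) else 0 := by
  simp only [liftedValue, deltaF_add_two, extF_of_lt φ hk, extF_of_lt φ (by omega : k < r),
    Fin.lt_def]
  split_ifs <;> push_cast <;> ring

lemma sub_add_ite_mem_Ioo {a b p : ℤ} (ha : 0 < a) (hap : a < p) (hb : 0 < b) (hbp : b < p)
    (hab : b ≠ a) : 0 < b - a + (if b < a then p else 0) ∧ b - a + (if b < a then p else 0) < p := by
  split_ifs <;> omega

lemma liftedValue_succ_sub_mem_Ioo (hφ : φ ∈ PhiSet r s) {p : ℕ} {Av : Fin s → ℕ}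
    (hA : Av ∈ Ys p s) {k : ℕ} (hk : k + 1 < r) :
    0 < liftedValue φ Av p ⟨k + 1, hk⟩ - liftedValue φ Av p ⟨k, by omega⟩ ∧
      liftedValue φ Av p ⟨k + 1, hk⟩ - liftedValue φ Av p ⟨k, by omega⟩ < p := by
  obtain ⟨hmono, hpos, hlt⟩ := hA
  have hne : φ ⟨k + 1, hk⟩ ≠ φ ⟨k, by omega⟩ := by
    have := hφ.2 k hk
    rw [extF_of_lt φ hk, extF_of_lt φ (by omega : k < r)] at this
    exact fun h => this (congrArg Fin.val h.symm)
  rw [liftedValue_succ_sub]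
  simp only [← hmono.lt_iff_lt, ← Nat.cast_lt (α := ℤ)]
  exact sub_add_ite_mem_Ioo (by exact_mod_cast hpos _) (by exact_mod_cast hlt _)
    (by exact_mod_cast hpos _) (by exact_mod_cast hlt _)
    (by exact_mod_cast hmono.injective.ne hne)

end Construction

lemma not_dvd_add_mul_self {a p : ℤ} (ha : 0 < a) (hap : a < p) (d : ℤ) : ¬ p ∣ a + d * p := by
  rw [dvd_add_left (dvd_mul_left p d)]
  exact fun h => ha.ne' (Int.eq_zero_of_dvd_of_nonneg_of_lt ha.le hap h)

/-- Indices of `Fin r` are 0-based: position `i : Fin r` is the paper's `i + 1`. -/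
theorem construction_lemma_general (p r s : ℕ)
    (φ : Fin r → Fin s) (hφ : φ ∈ PhiSet r s) (Av : Fin s → ℕ) (hA : Av ∈ Ys p s)
    (l : Fin r → ℤ)
    (hl : ∀ i : Fin r, l i =
      if (i : ℕ) = 0 then (Av (φ i) : ℤ)
      else ((Av (φ i) : ℤ) + deltaF φ ((i : ℕ) + 1) * p)
        - ((Av (φ ⟨(i : ℕ) - 1, lt_of_le_of_lt (Nat.sub_le _ _) i.isLt⟩) : ℤ)
            + deltaF φ (i : ℕ) * p)) :
    (∀ i, 0 < l i ∧ l i < p) ∧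
    (∀ i : Fin r, ∑ j ∈ Finset.Iic i, l j = (Av (φ i) : ℤ) + deltaF φ ((i : ℕ) + 1) * p) ∧
    (∀ i : Fin r, (∑ j ∈ Finset.Iic i, l j) ≡ (Av (φ i) : ℤ) [ZMOD p]) ∧
    (∀ i : Fin r, ¬ ((p : ℤ) ∣ ∑ j ∈ Finset.Iic i, l j)) := by
  have hl_zero : ∀ i : Fin r, (i : ℕ) = 0 → l i = liftedValue φ Av p i := fun i hi => by
    simp [hl i, hi, liftedValue, deltaF_one]
  have hl_succ : ∀ k (hk : k + 1 < r),
      l ⟨k + 1, hk⟩ = liftedValue φ Av p ⟨k + 1, hk⟩ - liftedValue φ Av p ⟨k, by omega⟩ :=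
    fun k hk => by simp [hl, liftedValue]
  have hsum : ∀ i, ∑ j ∈ Finset.Iic i, l j = liftedValue φ Av p i :=
    sum_Iic_eq_of_sub hl_zero hl_succ
  have hAv_pos : ∀ i : Fin r, (0 : ℤ) < Av (φ i) := fun i => by exact_mod_cast hA.2.1 _
  have hAv_lt : ∀ i : Fin r, (Av (φ i) : ℤ) < p := fun i => by exact_mod_cast hA.2.2 _
  refine ⟨fun i => ?_, hsum, fun i => ?_, fun i => ?_⟩
  · obtain ⟨_ | k, hk⟩ := i
    · rw [hl_zero _ rfl, liftedValue, deltaF_one, Nat.cast_zero, zero_mul, add_zero]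
      exact ⟨hAv_pos _, hAv_lt _⟩
    · rw [hl_succ]
      exact liftedValue_succ_sub_mem_Ioo φ hφ hA hk
  · rw [hsum, liftedValue]
    simp [Int.ModEq]
  · rw [hsum, liftedValue]
    exact not_dvd_add_mul_self (hAv_pos i) (hAv_lt i) _

/-- Given φ ∈ Φ_{r,s} and (A_1,…,A_s) ∈ Y_s, the integers
l_1 := A_{φ(1)}, l_i := (A_{φ(i)} + δ_φ(i)p) − (A_{φ(i−1)} + δ_φ(i−1)p) satisfy
0 < l_i < p, have partial sums l_1 + ⋯ + l_i = A_{φ(i)} + δ_φ(i)p, and in particular each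
partial sum is congruent to A_{φ(i)} mod p and prime to p.
(Here indices of `Fin r` are 0-based, so position `i : Fin r` is the paper's `i+1`.) -/
theorem construction_lemma (p r s : ℕ) (hp : p.Prime) (hs : 1 ≤ s) (hsr : s ≤ r)
    (φ : Fin r → Fin s) (hφ : φ ∈ PhiSet r s) (Av : Fin s → ℕ) (hA : Av ∈ Ys p s)
    (l : Fin r → ℤ)
    (hl : ∀ i : Fin r, l i =
      if (i : ℕ) = 0 then (Av (φ i) : ℤ)
      else ((Av (φ i) : ℤ) + deltaF φ ((i : ℕ) + 1) * p)
        - ((Av (φ ⟨(i : ℕ) - 1, lt_of_le_of_lt (Nat.sub_le _ _) i.isLt⟩) : ℤ)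
            + deltaF φ (i : ℕ) * p)) :
    (∀ i, 0 < l i ∧ l i < p) ∧
    (∀ i : Fin r, ∑ j ∈ Finset.Iic i, l j = (Av (φ i) : ℤ) + deltaF φ ((i : ℕ) + 1) * p) ∧
    (∀ i : Fin r, (∑ j ∈ Finset.Iic i, l j) ≡ (Av (φ i) : ℤ) [ZMOD p]) ∧
    (∀ i : Fin r, ¬ ((p : ℤ) ∣ ∑ j ∈ Finset.Iic i, l j)) :=
  construction_lemma_general p r s φ hφ Av hA l hl

end FMP
end

section
/- Fix a prime p and a positive integer r. For every x = (l_1,…,l_r) ∈ X_r and every 1 ≤ i ≤ r, one has (i−1)p < l_1+⋯+l_r < ip if and only if δ_{φ_x}(r) + 1 = i; equivalently, X^i_r = ⊔_{φ ∈ Φ^i_r} X_φ, where X^i_r := {x ∈ X_r : (i−1)p < L_r < ip} and X_φ := {x ∈ X_r : φ_x = φ}. -/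
open scoped BigOperators

namespace FMP

lemma modeq_eq_of_close {p B C : ℕ} (h : C ≡ B [MOD p]) (h1 : C < B + p) (h2 : B < C + p) :
    C = B := by
  rcases le_total B C with hle | hle
  · obtain ⟨k, hk⟩ := (Nat.modEq_iff_dvd' hle).mp h.symm
    rcases Nat.eq_zero_or_pos k with rfl | hk0
    · omega
    · have : p * 1 ≤ p * k := Nat.mul_le_mul_left p hk0
      omega
  · obtain ⟨k, hk⟩ := (Nat.modEq_iff_dvd' hle).mp h
    rcases Nat.eq_zero_or_pos k with rfl | hk0
    · omega
    · have : p * 1 ≤ p * k := Nat.mul_le_mul_left p hk0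
      omega

lemma modeq_eq_add_p {p B C : ℕ} (h : C ≡ B [MOD p]) (h1 : B < C) (h2 : C < B + 2 * p) :
    C = B + p := by
  obtain ⟨k, hk⟩ := (Nat.modEq_iff_dvd' h1.le).mp h.symm
  rcases Nat.lt_or_ge k 2 with hk2 | hk2
  · interval_cases k <;> omega
  · have : p * 2 ≤ p * k := Nat.mul_le_mul_left p hk2
    omega


/-- For x ∈ X_r and 1 ≤ i ≤ r: (i−1)p < l_1 + ⋯ + l_r < ip  ⟺  δ_{φ_x}(r) + 1 = i,
i.e. X^i_r = ⊔_{φ ∈ Φ^i_r} X_φ.  (Here φ plays the role of the unique φ_x attached to x.) -/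
theorem mem_Xir_iff_betaF (p r : ℕ) (hp : p.Prime) (hr : 0 < r)
    (l : Fin r → ℕ) (hl : l ∈ Xr p r)
    (s : ℕ) (hs : 1 ≤ s) (hsr : s ≤ r) (φ : Fin r → Fin s) (hφ : φ ∈ PhiSet r s)
    (Av : Fin s → ℕ) (hA : Av ∈ Ys p s)
    (hcong : ∀ i : Fin r, psum l i ≡ Av (φ i) [MOD p])
    (i : ℕ) (hi1 : 1 ≤ i) (hir : i ≤ r) :
    ((i - 1) * p < ∑ j, l j ∧ ∑ j, l j < i * p) ↔ betaF φ = i := by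
  have hp0 : 0 < p := hp.pos
  obtain ⟨hbound, _⟩ := hl
  obtain ⟨hmono, hApos, hAlt⟩ := hA
  -- key lemma
  have key : ∀ n, ∀ h : n < r, psum l ⟨n, h⟩ = Av (φ ⟨n, h⟩) + p * deltaF φ (n + 1) := by
    intro n
    induction n with
    | zero =>
      intro h
      have hIic : Finset.Iic (⟨0, h⟩ : Fin r) = {⟨0, h⟩} := by
        ext j; simp [Fin.le_def, Fin.ext_iff] <;> omega
      have hd0 : deltaF φ 1 = 0 := by simp [deltaF]
      rw [hd0]
      have hps : psum l ⟨0, h⟩ = l ⟨0, h⟩ := by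
        unfold psum; rw [hIic, Finset.sum_singleton]
      rw [hps]
      have hc := hcong ⟨0, h⟩
      rw [hps] at hc
      have := modeq_eq_of_close hc (by have := (hbound ⟨0, h⟩).2; omega)
        (by have := hAlt (φ ⟨0, h⟩); omega)
      omega
    | succ n ih =>
      intro h
      have hn : n < r := by omega
      have hps : psum l ⟨n + 1, h⟩ = psum l ⟨n, hn⟩ + l ⟨n + 1, h⟩ := by
        unfold psum
        rw [show Finset.Iic (⟨n + 1, h⟩ : Fin r) = insert ⟨n + 1, h⟩ (Finset.Iic ⟨n, hn⟩) by
          ext j; simp [Fin.le_def, Fin.ext_iff] <;> omega]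
        rw [Finset.sum_insert (by simp [Fin.le_def])]
        ring
      have hext1 : extF φ n = (φ ⟨n, hn⟩ : ℕ) := dif_pos hn
      have hext2 : extF φ (n + 1) = (φ ⟨n + 1, h⟩ : ℕ) := dif_pos h
      have hne : φ ⟨n, hn⟩ ≠ φ ⟨n + 1, h⟩ := by
        intro heq
        exact hφ.2 n h (by rw [hext1, hext2, heq])
      have hdelta : deltaF φ (n + 1 + 1)
          = deltaF φ (n + 1) + (if extF φ (n + 1) < extF φ n then 1 else 0) := by
        unfold deltaF
        simp only [Nat.add_sub_cancel, Finset.range_add_one, Finset.filter_insert]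
        split
        · rw [Finset.card_insert_of_notMem (by simp)]
        · simp
      set A' := Av (φ ⟨n, hn⟩) with hA'
      set B := Av (φ ⟨n + 1, h⟩) with hB
      set C := A' + l ⟨n + 1, h⟩ with hC
      set D := deltaF φ (n + 1) with hD
      have hCB : C ≡ B [MOD p] := by
        have h1 := hcong ⟨n + 1, h⟩
        rw [hps, ih hn] at h1
        unfold Nat.ModEq at h1 ⊢
        rw [show A' + p * D + l ⟨n + 1, h⟩ = C + p * D by ring] at h1
        rwa [Nat.add_mul_mod_self_left] at h1
      have hlB : l ⟨n + 1, h⟩ < p := (hbound ⟨n + 1, h⟩).2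
      have hl0 : 0 < l ⟨n + 1, h⟩ := (hbound ⟨n + 1, h⟩).1
      rcases hne.lt_or_gt with hlt | hlt
      · -- no descent: φ(n) < φ(n+1), so A' < B
        have hBA : A' < B := hmono hlt
        have hCeq : C = B := modeq_eq_of_close hCB (by omega)
          (by have := hAlt (φ ⟨n + 1, h⟩); omega)
        have hcond : ¬ extF φ (n + 1) < extF φ n := by
          rw [hext1, hext2]
          have := (Fin.lt_def).mp hlt
          omega
        rw [hps, ih hn, hdelta, if_neg hcond]
        simp only [Nat.add_zero]
        have hCeq' : A' + l ⟨n + 1, h⟩ = B := hCeq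
        omega
      · -- descent: φ(n+1) < φ(n), so B < A'
        have hBA : B < A' := hmono hlt
        have hCeq : C = B + p := modeq_eq_add_p hCB (by omega)
          (by have := hAlt (φ ⟨n, hn⟩); omega)
        have hcond : extF φ (n + 1) < extF φ n := by
          rw [hext1, hext2]; exact hlt
        rw [hps, ih hn, hdelta, if_pos hcond, mul_add, mul_one]
        have hCeq' : A' + l ⟨n + 1, h⟩ = B + p := hCeq
        omega
  -- total sum
  have hlast : r - 1 < r := by omega
  have hsum : ∑ j, l j = psum l ⟨r - 1, hlast⟩ := by
    unfold psum
    apply Finset.sum_congr _ (fun _ _ => rfl)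
    ext j
    simp [Fin.le_def]
    omega
  have hkey := key (r - 1) hlast
  rw [show r - 1 + 1 = r by omega] at hkey
  rw [hsum, hkey]
  set A := Av (φ ⟨r - 1, hlast⟩) with hAdef
  set D := deltaF φ r with hDdef
  have hA0 : 0 < A := hApos _
  have hAp : A < p := hAlt _
  unfold betaF
  constructor
  · rintro ⟨h1, h2⟩
    have hb1 : p * D < p * i := by
      calc p * D ≤ A + p * D := Nat.le_add_left _ _
        _ < i * p := h2
        _ = p * i := mul_comm _ _
    have hDi : D < i := Nat.lt_of_mul_lt_mul_left hb1
    have hb2 : (i - 1) * p < (D + 1) * p := by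
      calc (i - 1) * p < A + p * D := h1
        _ < (D + 1) * p := by rw [add_mul, one_mul, mul_comm D p]; omega
    have hiD : i - 1 < D + 1 := Nat.lt_of_mul_lt_mul_right hb2
    omega
  · intro h
    have hi : i = D + 1 := by omega
    subst hi
    have e1 : (D + 1 - 1) * p = p * D := by rw [Nat.add_sub_cancel, mul_comm]
    have e2 : (D + 1) * p = p * D + p := by rw [add_mul, one_mul, mul_comm D p]
    omega

end FMP
end

section
/- Let X and Y be nonzero elements of a field with X + Y ≠ 0, and let α and β be positive integers. Then 1/(X^α Y^β) = Σ_{τ=0}^{β−1} C(α−1+τ, τ) · 1/((X+Y)^{α+τ} Y^{β−τ}) + Σ_{τ=0}^{α−1} C(β−1+τ, τ) · 1/((X+Y)^{β+τ} X^{α−τ}), where C(n,k) denotes the binomial coefficient. -/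
open scoped BigOperators

lemma pfd_base {K : Type*} [Field K] (X Y : K)
    (hX : X ≠ 0) (hY : Y ≠ 0) (hXY : X + Y ≠ 0) (b : ℕ) (hb : 0 < b) :
    1 / (X * Y ^ b)
      = (∑ τ ∈ Finset.range b, 1 / ((X + Y) ^ (1 + τ) * Y ^ (b - τ)))
        + 1 / ((X + Y) ^ b * X) := by
  induction b, hb using Nat.le_induction with
  | base => simp only [Finset.sum_range_one, pow_one, add_zero, pow_zero]; field_simp; ring
  | succ b hb IH =>
    have hYb : Y ^ b ≠ 0 := pow_ne_zero _ hY
    have step : 1 / (X * Y ^ (b+1))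
        = 1 / ((X+Y) * Y ^ (b+1)) + (1/(X+Y)) * (1 / (X * Y ^ b)) := by
      rw [pow_succ]
      field_simp
    rw [Finset.sum_range_succ', step, IH, mul_add, Finset.mul_sum]
    have h1 : ∀ τ ∈ Finset.range b,
        (1/(X+Y)) * (1 / ((X + Y) ^ (1 + τ) * Y ^ (b - τ)))
          = 1 / ((X + Y) ^ (1 + (τ+1)) * Y ^ (b + 1 - (τ+1))) := by
      intro τ _
      have e1 : b + 1 - (τ+1) = b - τ := by omega
      have e2 : (1 : ℕ) + (τ+1) = (1+τ) + 1 := by omega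
      rw [e1, e2, pow_succ]
      have := pow_ne_zero (1+τ) hXY
      field_simp
    rw [Finset.sum_congr rfl h1]
    have h2 : (1/(X+Y)) * (1 / ((X + Y) ^ b * X)) = 1 / ((X+Y)^(b+1) * X) := by
      rw [pow_succ]
      have := pow_ne_zero b hXY
      field_simp
    rw [h2]
    simp only [add_zero, Nat.sub_zero, pow_one]
    ring

lemma pfd_step {K : Type*} [Field K] (S Z : K) (p q : ℕ) :
    (∑ τ ∈ Finset.range (q+2),
        (1/S) * (((p+τ).choose τ : K) * (1/(S^(p+1+τ) * Z^(q+2-τ)))))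
    + (∑ τ ∈ Finset.range (q+1),
        (1/S) * (((p+1+τ).choose τ : K) * (1/(S^(p+2+τ) * Z^(q+1-τ)))))
    = ∑ τ ∈ Finset.range (q+2),
        ((p+1+τ).choose τ : K) * (1/(S^(p+2+τ) * Z^(q+2-τ))) := by
  rw [Finset.sum_range_succ'
        (fun τ => (1/S) * (((p+τ).choose τ : K) * (1/(S^(p+1+τ) * Z^(q+2-τ))))) (q+1),
      Finset.sum_range_succ'
        (fun τ => ((p+1+τ).choose τ : K) * (1/(S^(p+2+τ) * Z^(q+2-τ)))) (q+1)]
  have h0 : (1/S) * (((p+0).choose 0 : K) * (1/(S^(p+1+0) * Z^(q+2-0))))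
      = ((p+1+0).choose 0 : K) * (1/(S^(p+2+0) * Z^(q+2-0))) := by
    simp only [Nat.choose_zero_right, Nat.cast_one, one_mul, add_zero, Nat.sub_zero,
      show p+2 = (p+1)+1 from rfl, pow_succ, one_div, mul_inv]
    ring
  have hs : ∀ τ ∈ Finset.range (q+1),
      (1/S) * (((p+(τ+1)).choose (τ+1) : K) * (1/(S^(p+1+(τ+1)) * Z^(q+2-(τ+1)))))
      + (1/S) * (((p+1+τ).choose τ : K) * (1/(S^(p+2+τ) * Z^(q+1-τ))))
      = ((p+1+(τ+1)).choose (τ+1) : K) * (1/(S^(p+2+(τ+1)) * Z^(q+2-(τ+1)))) := by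
    intro τ _
    rw [show p+(τ+1) = p+1+τ from by omega]
    rw [show p+1+(τ+1) = (p+1+τ)+1 from by omega]
    rw [Nat.choose_succ_succ, Nat.cast_add]
    rw [show q+2-(τ+1) = q+1-τ from by omega]
    rw [show p+2+(τ+1) = (p+2+τ)+1 from by omega]
    rw [show (p+1+τ)+1 = p+2+τ from by omega]
    rw [pow_succ]
    simp only [one_div, mul_inv]
    ring
  have hsum := Finset.sum_congr rfl hs
  rw [Finset.sum_add_distrib] at hsum
  linear_combination hsum + h0

lemma pfd_main {K : Type*} [Field K] (X Y : K)
    (hX : X ≠ 0) (hY : Y ≠ 0) (hXY : X + Y ≠ 0) :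
    ∀ n a b : ℕ, a + b = n → 0 < a → 0 < b →
    1 / (X ^ a * Y ^ b)
      = (∑ τ ∈ Finset.range b,
          ((a - 1 + τ).choose τ : K) * (1 / ((X + Y) ^ (a + τ) * Y ^ (b - τ))))
      + (∑ τ ∈ Finset.range a,
          ((b - 1 + τ).choose τ : K) * (1 / ((X + Y) ^ (b + τ) * X ^ (a - τ)))) := by
  intro n
  induction n using Nat.strong_induction_on with
  | _ n IH =>
  intro a b hn ha hb
  rcases Nat.lt_or_ge a 2 with ha2 | ha2
  · -- a = 1
    obtain rfl : a = 1 := by omega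
    simp only [pow_one, Finset.sum_range_one, Nat.sub_self, zero_add, Nat.choose_self,
      Nat.cast_one, one_mul, add_zero, Nat.sub_zero, Nat.choose_zero_right]
    exact pfd_base X Y hX hY hXY b hb
  rcases Nat.lt_or_ge b 2 with hb2 | hb2
  · -- b = 1
    obtain rfl : b = 1 := by omega
    have hbase := pfd_base Y X hY hX (by rw [add_comm]; exact hXY) a ha
    rw [add_comm Y X] at hbase
    simp only [pow_one, Finset.sum_range_one, Nat.sub_self, zero_add, Nat.choose_self,
      Nat.cast_one, one_mul, add_zero, Nat.sub_zero, Nat.choose_zero_right]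
    rw [mul_comm (X ^ a) Y, hbase]
    ring
  · -- a ≥ 2, b ≥ 2
    obtain ⟨p, rfl⟩ : ∃ p, a = p + 2 := ⟨a - 2, by omega⟩
    obtain ⟨q, rfl⟩ : ∃ q, b = q + 2 := ⟨b - 2, by omega⟩
    have hXp1 : X ^ (p+1) ≠ 0 := pow_ne_zero _ hX
    have hXp2 : X ^ (p+2) ≠ 0 := pow_ne_zero _ hX
    have hYq1 : Y ^ (q+1) ≠ 0 := pow_ne_zero _ hY
    have hYq2 : Y ^ (q+2) ≠ 0 := pow_ne_zero _ hY
    have IH1 := IH (n-1) (by omega) (p+1) (q+2) (by omega) (by omega) (by omega)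
    have IH2 := IH (n-1) (by omega) (p+2) (q+1) (by omega) (by omega) (by omega)
    simp only [show p+1-1 = p from rfl, show q+1-1 = q from rfl,
      show p+2-1 = p+1 from rfl, show q+2-1 = q+1 from rfl] at IH1 IH2 ⊢
    have inner : 1/(X^(p+1)*Y^(q+2)) + 1/(X^(p+2)*Y^(q+1)) = (X+Y) / (X^(p+2)*Y^(q+2)) := by
      rw [div_add_div _ _ (mul_ne_zero hXp1 hYq2) (mul_ne_zero hXp2 hYq1),
        div_eq_div_iff (mul_ne_zero (mul_ne_zero hXp1 hYq2) (mul_ne_zero hXp2 hYq1))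
          (mul_ne_zero hXp2 hYq2)]
      ring
    have key : 1 / (X ^ (p+2) * Y ^ (q+2))
        = (1/(X+Y)) * (1 / (X ^ (p+1) * Y ^ (q+2)))
          + (1/(X+Y)) * (1 / (X ^ (p+2) * Y ^ (q+1))) := by
      rw [← mul_add, inner, ← mul_div_assoc, one_div_mul_cancel hXY]
    rw [key, IH1, IH2, mul_add, mul_add, Finset.mul_sum, Finset.mul_sum, Finset.mul_sum,
      Finset.mul_sum]
    have hA := pfd_step (X+Y) Y p q
    have hB := pfd_step (X+Y) X q p
    linear_combination hA + hB

/-- Partial fraction decomposition (Komori–Matsumoto–Tsumura):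
1/(X^α Y^β) = Σ_{τ=0}^{β−1} C(α−1+τ, τ)/((X+Y)^{α+τ} Y^{β−τ})
            + Σ_{τ=0}^{α−1} C(β−1+τ, τ)/((X+Y)^{β+τ} X^{α−τ}). -/
theorem partial_fraction_decomposition {K : Type*} [Field K] (X Y : K)
    (hX : X ≠ 0) (hY : Y ≠ 0) (hXY : X + Y ≠ 0) (a b : ℕ) (ha : 0 < a) (hb : 0 < b) :
    1 / (X ^ a * Y ^ b)
      = (∑ τ ∈ Finset.range b,
          ((a - 1 + τ).choose τ : K) * (1 / ((X + Y) ^ (a + τ) * Y ^ (b - τ))))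
      + (∑ τ ∈ Finset.range a,
          ((b - 1 + τ).choose τ : K) * (1 / ((X + Y) ^ (b + τ) * X ^ (a - τ)))) := by
  exact pfd_main X Y hX hY hXY (a + b) a b rfl ha hb
end
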